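/- arXiv:1809.09815 — 2 statements merged into one kernel-verified Lean document; each statement's English description precedes it below -/
import Mathlib

section
/- If a two-point numerical flux f_{i+1/2} = f_S(u_i, u_{i+1}) satisfies Tadmor's shuffle condition (v_{i+1} − v_i)ᵀ f_{i+1/2} = ψ_{i+1} − ψ_i, then multiplying the finite volume scheme du_i/dt = −(f_{i+1/2} − f_{i−1/2})/Δx by v_iᵀ yields dU_i/dt = −(F_{i+1/2} − F_{i−1/2})/Δx, where F_{i+1/2} = ½(v_{i+1} + v_i)ᵀ f_{i+1/2} − ½(ψ_{i+1} + ψ_i). -/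
/-! Under the shuffle condition the averaged flux `F_{i+1/2}` equals both one-sided
expressions `v_iᵀ f_{i+1/2} − ψ_i` and `v_{i+1}ᵀ f_{i+1/2} − ψ_{i+1}`. Hence
`v_iᵀ (f_{i+1/2} − f_{i−1/2}) = (F_{i+1/2} + ψ_i) − (F_{i−1/2} + ψ_i)`, and the `ψ_i` cancel. -/

section ShuffleCondition

variable {ι R : Type*} [Fintype ι] [Field R] [NeZero (2 : R)]

def tadmorEntropyFlux (vL vR f : ι → R) (ψL ψR : R) : R :=
  1 / 2 * ((vR + vL) ⬝ᵥ f) - 1 / 2 * (ψR + ψL)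

variable {vL vR f : ι → R} {ψL ψR : R}

theorem tadmorEntropyFlux_eq_left (h : (vR - vL) ⬝ᵥ f = ψR - ψL) :
    tadmorEntropyFlux vL vR f ψL ψR = vL ⬝ᵥ f - ψL := by
  rw [sub_dotProduct] at h
  rw [tadmorEntropyFlux, add_dotProduct]
  field_simp
  linear_combination h

theorem tadmorEntropyFlux_eq_right (h : (vR - vL) ⬝ᵥ f = ψR - ψL) :
    tadmorEntropyFlux vL vR f ψL ψR = vR ⬝ᵥ f - ψR := by
  rw [tadmorEntropyFlux_eq_left h]
  rw [sub_dotProduct] at h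
  linear_combination -h

end ShuffleCondition

theorem tadmor_entropy_conservation_general
    {n : ℕ} (v fh : ℤ → Fin n → ℝ) (ψ Fh : ℤ → ℝ)
    (hshuffle : ∀ i, (v (i + 1) - v i) ⬝ᵥ fh i = ψ (i + 1) - ψ i)
    (hFh : ∀ i, Fh i = (1 / 2) * ((v (i + 1) + v i) ⬝ᵥ fh i)
        - (1 / 2) * (ψ (i + 1) + ψ i))
    (Δx : ℝ) (dudt : ℤ → Fin n → ℝ)
    (hscheme : ∀ i, dudt i = -(1 / Δx) • (fh i - fh (i - 1))) :
    ∀ i, v i ⬝ᵥ dudt i = -(1 / Δx) * (Fh i - Fh (i - 1)) := by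
  intro i
  have hright : Fh i = v i ⬝ᵥ fh i - ψ i :=
    (hFh i).trans (tadmorEntropyFlux_eq_left (hshuffle i))
  have hleft : Fh (i - 1) = v i ⬝ᵥ fh (i - 1) - ψ i := by
    simpa using (hFh (i - 1)).trans (tadmorEntropyFlux_eq_right (hshuffle (i - 1)))
  rw [hscheme i, dotProduct_smul, dotProduct_sub, smul_eq_mul, hright, hleft]
  ring

/-- If a two-point numerical flux satisfies Tadmor's shuffle condition
`(v_{i+1} − v_i)ᵀ f_{i+1/2} = ψ_{i+1} − ψ_i`, then multiplying the finite volume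
scheme `du_i/dt = −(f_{i+1/2} − f_{i−1/2})/Δx` by `v_iᵀ` yields
`dU_i/dt = −(F_{i+1/2} − F_{i−1/2})/Δx` with
`F_{i+1/2} = ½(v_{i+1}+v_i)ᵀ f_{i+1/2} − ½(ψ_{i+1}+ψ_i)`. -/
theorem tadmor_entropy_conservation
    {n : ℕ} (v fh : ℤ → Fin n → ℝ) (ψ Fh : ℤ → ℝ)
    (hshuffle : ∀ i, (v (i + 1) - v i) ⬝ᵥ fh i = ψ (i + 1) - ψ i)
    (hFh : ∀ i, Fh i = (1 / 2) * ((v (i + 1) + v i) ⬝ᵥ fh i)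
        - (1 / 2) * (ψ (i + 1) + ψ i))
    (Δx : ℝ) (hΔx : 0 < Δx) (dudt : ℤ → Fin n → ℝ)
    (hscheme : ∀ i, dudt i = -(1 / Δx) • (fh i - fh (i - 1))) :
    ∀ i, v i ⬝ᵥ dudt i = -(1 / Δx) * (Fh i - Fh (i - 1)) :=
  tadmor_entropy_conservation_general v fh ψ Fh hshuffle hFh Δx dudt hscheme
end

section
/- Let D̃ satisfy the SBP property W D̃ + D̃ᵀ W = B, row sums of D̃ vanish, and let f_S satisfy the entropy conservation condition (v_β − v_α)ᵀ f_S(u_α, u_β) = ψ_β − ψ_α for states u_γ with entropy variables v_γ and potentials ψ_γ. Then Σ_{α,β} (v_α − v_β)ᵀ w_α D̃_{α,β} f_S(u_α, u_β) = ψ_1 − ψ_μ. -/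
open scoped BigOperators Matrix

/-!
By entropy conservation the flux term equals `ψ α - ψ β`. Weighted by `Q = W D̃`, the `ψ α` part
vanishes because the rows of `D̃` sum to zero, while the `ψ β` part is weighted by the column sums
of `Q`. Summing `Q + Qᵀ = B` over a column and using the vanishing row sums again shows that these
column sums are the diagonal entries of `B = diag(-1, 0, …, 0, 1)`.
-/

open Finset

section
variable {ι R : Type*} [Fintype ι] [CommRing R]

theorem sum_sum_mul_sub_of_row_sum_eq_zero (Q : ι → ι → R) (hrow : ∀ i, ∑ j, Q i j = 0)
    (ψ : ι → R) :
    ∑ i, ∑ j, Q i j * (ψ i - ψ j) = -∑ j, (∑ i, Q i j) * ψ j := by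
  have hdiag : ∑ i, ∑ j, Q i j * ψ i = 0 := by
    simp only [← sum_mul, hrow, zero_mul, sum_const_zero]
  simp only [mul_sub, sum_sub_distrib, hdiag, zero_sub, sum_mul]
  rw [sum_comm]

theorem col_sum_eq_of_add_swap_eq_diagonal [DecidableEq ι] (Q : ι → ι → R) (b : ι → R)
    (hsbp : ∀ i j, Q i j + Q j i = if i = j then b i else 0)
    (hrow : ∀ i, ∑ j, Q i j = 0) (j : ι) :
    ∑ i, Q i j = b j := by
  have hsum := sum_congr rfl fun i (_ : i ∈ univ) => hsbp i j
  rwa [sum_add_distrib, hrow, add_zero, sum_ite_eq', if_pos (mem_univ j)] at hsum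

theorem sum_boundary_mul_eq_sub {μ : ℕ} (hμ : 2 ≤ μ) (ψ : Fin μ → R)
    (left right : Fin μ) (hleft : (left : ℕ) = 0) (hright : (right : ℕ) = μ - 1) :
    ∑ β : Fin μ, (if (β : ℕ) = 0 then (-1 : R) else if (β : ℕ) = μ - 1 then 1 else 0) * ψ β
      = ψ right - ψ left := by
  have hterm : ∀ β : Fin μ,
      (if (β : ℕ) = 0 then (-1 : R) else if (β : ℕ) = μ - 1 then 1 else 0) * ψ β
        = (if β = right then ψ β else 0) - (if β = left then ψ β else 0) := fun β => by
    simp only [Fin.ext_iff, hleft, hright]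
    split_ifs <;> first | omega | ring
  simp only [hterm, sum_sub_distrib, sum_ite_eq', mem_univ, if_true]

end

/-- With `D̃` satisfying the SBP property, vanishing row sums, and
`f_S` entropy-conservative (`(v_β − v_α)ᵀ f_S(u_α,u_β) = ψ_β − ψ_α`), the
flux-differencing entropy volume term reduces to boundary potentials:
`Σ_{α,β} (v_α − v_β)ᵀ w_α D̃_{α,β} f_S(u_α,u_β) = ψ_1 − ψ_μ`. -/
theorem flux_differencing_entropy_volume
    {n μ : ℕ} (hμ : 2 ≤ μ)
    (w : Fin μ → ℝ)
    (Dt : Matrix (Fin μ) (Fin μ) ℝ)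
    (hsbp : ∀ α β, w α * Dt α β + w β * Dt β α =
      if α = β then
        (if (α : ℕ) = 0 then (-1 : ℝ) else if (α : ℕ) = μ - 1 then 1 else 0)
      else 0)
    (hrow : ∀ α, ∑ β, Dt α β = 0)
    (u v : Fin μ → Fin n → ℝ) (ψ : Fin μ → ℝ)
    (fS : (Fin n → ℝ) → (Fin n → ℝ) → (Fin n → ℝ))
    (hec : ∀ α β, (v β - v α) ⬝ᵥ fS (u α) (u β) = ψ β - ψ α) :
    ∑ α, ∑ β, (w α * Dt α β) * ((v α - v β) ⬝ᵥ fS (u α) (u β))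
      = ψ ⟨0, by omega⟩ - ψ ⟨μ - 1, by omega⟩ := by
  have hflux : ∀ α β, (v α - v β) ⬝ᵥ fS (u α) (u β) = ψ α - ψ β := fun α β => by
    rw [← neg_sub (v β), neg_dotProduct, hec, neg_sub]
  have hQrow : ∀ α, ∑ β, w α * Dt α β = 0 := fun α => by rw [← mul_sum, hrow, mul_zero]
  calc ∑ α, ∑ β, (w α * Dt α β) * ((v α - v β) ⬝ᵥ fS (u α) (u β))
      = -∑ β, (∑ α, w α * Dt α β) * ψ β := by
        simp only [hflux]
        exact sum_sum_mul_sub_of_row_sum_eq_zero _ hQrow ψ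
    _ = ψ ⟨0, by omega⟩ - ψ ⟨μ - 1, by omega⟩ := by
        rw [neg_eq_iff_eq_neg, neg_sub]
        simp only [col_sum_eq_of_add_swap_eq_diagonal _ _ hsbp hQrow]
        exact sum_boundary_mul_eq_sub hμ ψ _ _ rfl rfl
end
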